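/- arXiv:2206.15100 — 2 statements merged into one kernel-verified Lean document; each statement's English description precedes it below -/
import Mathlib

section
/- Let T be a p-string of length n ending with a special static character $ that occurs nowhere else in T, and let k_T = RA_T⁻¹[n]. Then for every 1 ≤ p ≤ n, ⟦T⟧[p] = L_T[LF_T^{−p}(k_T)], where LF_T^{−p} denotes the p-fold iteration of the inverse of the LF mapping. -/
/-! Common framework: parameterized strings over static alphabet `σ` and
parameter alphabet `π`.  A p-string is a `List (σ ⊕ π)`. -/

variable {σ π : Type*}

instance instInhabSum [Inhabited σ] : Inhabited (σ ⊕ π) := ⟨Sum.inl default⟩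

/-- one right rotation: the last character moves to the front -/
def rotR1 {α : Type*} (W : List α) : List α := W.rotate (W.length - 1)

/-- `rotR W i` is the `i`-th right rotation `Rot(W, i)` -/
def rotR {α : Type*} (W : List α) : ℕ → List α
  | 0 => W
  | i + 1 => rotR1 (rotR W i)

/-- 1-based access `W[i]` (junk default outside the range) -/
def get1 {α : Type*} [Inhabited α] (W : List α) (i : ℕ) : α := W.getD (i - 1) default

/-- the prev-encoding `⟨T⟩`, a list over `σ ⊕ ℕ∞` -/
def prevEnc [DecidableEq σ] [DecidableEq π] (T : List (σ ⊕ π)) : List (σ ⊕ ℕ∞) :=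
  (List.range T.length).map fun k =>
    match T[k]? with
    | none => Sum.inr ⊤
    | some (Sum.inl a) => Sum.inl a
    | some (Sum.inr b) =>
      match ((List.range k).filter fun j => T[j]? = some (Sum.inr b)).max? with
      | none => Sum.inr ⊤
      | some j => Sum.inr ((k - j : ℕ) : ℕ∞)

/-- number of distinct parameter characters occurring in `W` -/
def distinctParams [DecidableEq π] (W : List (σ ⊕ π)) : ℕ :=
  (W.filterMap Sum.getRight?).dedup.length

/-- the encoding `⟦T⟧`, a list over `σ ⊕ ℕ`:  a static character is kept; a
parameter character at (1-based) position `i` is replaced by the number of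
distinct parameter characters in `Rot(T, n-i)[1:ℓ]` where `ℓ` is the leftmost
occurrence position of `T[i]` in `Rot(T, n-i)`. -/
def encodeE [DecidableEq σ] [DecidableEq π] (T : List (σ ⊕ π)) : List (σ ⊕ ℕ) :=
  (List.range T.length).map fun k =>
    match T[k]? with
    | none => Sum.inr 0
    | some (Sum.inl a) => Sum.inl a
    | some (Sum.inr b) =>
      let R := rotR T (T.length - (k + 1))
      Sum.inr (distinctParams (R.take (R.idxOf (Sum.inr b) + 1)))

/-- order on prev-encoding characters: every static character is smaller than
every element of `ℕ∞` (and `ℕ∞` carries its usual order with `∞` on top) -/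
def pvlt [LT σ] : (σ ⊕ ℕ∞) → (σ ⊕ ℕ∞) → Prop
  | Sum.inl a, Sum.inl b => a < b
  | Sum.inl _, Sum.inr _ => True
  | Sum.inr _, Sum.inl _ => False
  | Sum.inr x, Sum.inr y => x < y

/-- `T` is a p-string of length ≥ 1 ending with the static character `d`,
which occurs nowhere else in `T`. -/
def EndsWith [DecidableEq σ] [DecidableEq π] (T : List (σ ⊕ π)) (d : σ) : Prop :=
  1 ≤ T.length ∧ T.getLast? = some (Sum.inl d) ∧ T.count (Sum.inl d) = 1

/-- `RA` represents the parameterized rotation array `RA_T` (0-based indices: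
`RA_T[i] = (RA ⟨i-1⟩).val + 1`): the prev-encodings of the rotations are listed
in strictly increasing lexicographic order. -/
def IsRA [LinearOrder σ] [DecidableEq π] (T : List (σ ⊕ π))
    (RA : Fin T.length ≃ Fin T.length) : Prop :=
  ∀ i j : Fin T.length, i < j →
    List.Lex pvlt (prevEnc (rotR T ((RA i).val + 1))) (prevEnc (rotR T ((RA j).val + 1)))

/-- `LF` represents the LF mapping: `LF_T(i) = j` iff `T_{RA_T[i]+1} = T_{RA_T[j]}`. -/
def IsLF [LinearOrder σ] [DecidableEq π] (T : List (σ ⊕ π))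
    (RA LF : Fin T.length ≃ Fin T.length) : Prop :=
  ∀ i : Fin T.length, rotR T ((RA i).val + 2) = rotR T ((RA (LF i)).val + 1)

/-- the pBWT array `L_T[i] = ⟦T_{RA_T[i]}⟧[n]` -/
def Larr [LinearOrder σ] [DecidableEq π] [Inhabited σ] (T : List (σ ⊕ π))
    (RA : Fin T.length ≃ Fin T.length) (i : Fin T.length) : σ ⊕ ℕ :=
  get1 (encodeE (rotR T ((RA i).val + 1))) T.length

/-- the array `F_T[i] = ⟦T_{RA_T[i]}⟧[1]` -/
def Farr [LinearOrder σ] [DecidableEq π] [Inhabited σ] (T : List (σ ⊕ π))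
    (RA : Fin T.length ≃ Fin T.length) (i : Fin T.length) : σ ⊕ ℕ :=
  get1 (encodeE (rotR T ((RA i).val + 1))) 1

/-- longest common prefix of two lists -/
def lcp {α : Type*} [DecidableEq α] : List α → List α → List α
  | a :: as, b :: bs => if a = b then a :: lcp as bs else []
  | _, _ => []

/-- `lcp∞(X, Y)`: the number of `∞`'s in the longest common prefix of `X` and `Y` -/
def lcpInf [DecidableEq σ] (X Y : List (σ ⊕ ℕ∞)) : ℕ :=
  (lcp X Y).count (Sum.inr ⊤)

/-- the `∞`-LCP array (1-based): `LCP∞_T[i] = lcp∞(⟨T_{RA_T[i]}⟩, ⟨T_{RA_T[i+1]}⟩)`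
for `1 ≤ i < n`, and `0` otherwise. -/
def LCPa [LinearOrder σ] [DecidableEq π] (T : List (σ ⊕ π))
    (RA : Fin T.length ≃ Fin T.length) (i : ℕ) : ℕ :=
  if h : 1 ≤ i ∧ i < T.length then
    lcpInf (prevEnc (rotR T ((RA ⟨i - 1, by omega⟩).val + 1)))
           (prevEnc (rotR T ((RA ⟨i, h.2⟩).val + 1)))
  else 0

/-- parameterized match: a bijection on `σ ⊕ π` fixing all static characters
renames `S` into `T` -/
def PMatch (S T : List (σ ⊕ π)) : Prop :=
  ∃ f : (σ ⊕ π) ≃ (σ ⊕ π), (∀ a : σ, f (Sum.inl a) = Sum.inl a) ∧ S.map f = T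

/-- leftmost (1-based) occurrence position of `c` in `W`, `0` if absent -/
def leftPos [DecidableEq σ] [DecidableEq π] (W : List (σ ⊕ π)) (c : σ ⊕ π) : ℕ :=
  if W.contains c then W.idxOf c + 1 else 0

/-- rightmost (1-based) occurrence position of `c` in `W`, `0` if absent -/
def rightPos [DecidableEq σ] [DecidableEq π] (W : List (σ ⊕ π)) (c : σ ⊕ π) : ℕ :=
  if W.contains c then W.length - W.reverse.idxOf c else 0

/-! Since `RA_T[k_T] = n`, the row `k_T` holds `T` itself, and each application of `LF_T⁻¹`
turns the rotation of the current row one step to the right. After `p` steps the row holds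
`Rot(T, n - p)`, whose last encoded symbol is `⟦T⟧[p]` by the definition of `⟦·⟧`. -/

section Rotation

variable {α : Type*}

lemma rotR_eq_rotate (W : List α) (i : ℕ) : rotR W i = W.rotate (i * (W.length - 1)) := by
  induction i with
  | zero => simp [rotR]
  | succ i ih => rw [rotR, ih, rotR1, List.length_rotate, List.rotate_rotate, Nat.succ_mul]

@[simp]
lemma length_rotR (W : List α) (i : ℕ) : (rotR W i).length = W.length := by
  rw [rotR_eq_rotate, List.length_rotate]

/-- `j` right rotations are `n - j` left rotations, since `j * (n - 1) ≡ n - j [MOD n]`. -/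
lemma rotR_eq_rotate_sub {W : List α} {j : ℕ} (hj : j ≤ W.length) :
    rotR W j = W.rotate (W.length - j) := by
  rw [rotR_eq_rotate, ← List.rotate_mod, ← List.rotate_mod W (W.length - j)]
  congr 1
  refine Nat.ModEq.add_right_cancel' j ?_
  rcases Nat.eq_zero_or_pos W.length with h | h
  · simp [h]
  · rw [Nat.sub_add_cancel hj, show j * (W.length - 1) + j = W.length * j by
      cases hn : W.length <;> simp_all [Nat.mul_succ, Nat.mul_comm]]
    simp [Nat.ModEq]

lemma rotR_add (W : List α) (a b : ℕ) : rotR W (a + b) = rotR (rotR W a) b := by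
  induction b with
  | zero => rfl
  | succ b ih => rw [← Nat.add_assoc, rotR, ih, rotR]

@[simp]
lemma rotR_length (W : List α) : rotR W W.length = W := by
  rw [rotR_eq_rotate_sub le_rfl, Nat.sub_self, List.rotate_zero]

lemma rotR_add_length (W : List α) (a : ℕ) : rotR W (a + W.length) = rotR W a := by
  rw [Nat.add_comm, rotR_add, rotR_length]

lemma rotR_eq_rotR_length_sub {W : List α} {a p : ℕ} (hp : p ≤ W.length)
    (h : rotR W (a + p) = W) : rotR W a = rotR W (W.length - p) := by
  rw [← rotR_add_length, show a + W.length = a + p + (W.length - p) by omega, rotR_add, h]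

lemma getElem?_rotR_length_sub_one {W : List α} {p : ℕ} (hp1 : 1 ≤ p) (hp : p ≤ W.length) :
    (rotR W (W.length - p))[W.length - 1]? = W[p - 1]? := by
  rw [rotR_eq_rotate_sub (Nat.sub_le _ _), Nat.sub_sub_self hp,
    List.getElem?_rotate (by omega), show W.length - 1 + p = (p - 1) + W.length by omega,
    Nat.add_mod_right, Nat.mod_eq_of_lt (by omega)]

end Rotation

/-- Both sides are computed from the character `T[p]` and the rotation `Rot(T, n - p)`. -/
lemma get1_encodeE_eq_get1_encodeE_rotR [DecidableEq σ] [DecidableEq π] [Inhabited σ]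
    {T : List (σ ⊕ π)} {p : ℕ} (hp1 : 1 ≤ p) (hp : p ≤ T.length) :
    get1 (encodeE T) p = get1 (encodeE (rotR T (T.length - p))) T.length := by
  simp only [get1, encodeE, List.getD_eq_getElem?_getD, List.getElem?_map, List.getElem?_range
    (show p - 1 < T.length by omega), List.getElem?_range (show T.length - 1 < T.length by omega),
    length_rotR, getElem?_rotR_length_sub_one hp1 hp, Option.map_some, Option.getD_some,
    show T.length - (p - 1 + 1) = T.length - p by omega,
    show T.length - (T.length - 1 + 1) = 0 by omega]
  rfl

section LF

variable [LinearOrder σ] [DecidableEq π] {T : List (σ ⊕ π)} {RA LF : Fin T.length ≃ Fin T.length}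

lemma IsLF.rotR_symm_apply (hLF : IsLF T RA LF) (i : Fin T.length) :
    rotR T ((RA (LF.symm i)).val + 2) = rotR T ((RA i).val + 1) := by
  simpa using hLF (LF.symm i)

lemma IsLF.rotR_symm_iterate (hLF : IsLF T RA LF) (i : Fin T.length) (q : ℕ) :
    rotR T ((RA ((LF.symm : Fin T.length → Fin T.length)^[q] i)).val + 1 + q) =
      rotR T ((RA i).val + 1) := by
  induction q with
  | zero => rfl
  | succ q ih =>
    rw [Function.iterate_succ_apply', ← ih, show ∀ a, a + 1 + (q + 1) = a + 2 + q by omega,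
      rotR_add, hLF.rotR_symm_apply, ← rotR_add]

end LF

theorem encode_eq_Larr_iterate_general [LinearOrder σ] [DecidableEq π] [Inhabited σ]
    (T : List (σ ⊕ π))
    (RA : Fin T.length ≃ Fin T.length)
    (LF : Fin T.length ≃ Fin T.length) (hLF : IsLF T RA LF)
    (kT : Fin T.length) (hkT : (RA kT).val + 1 = T.length) :
    ∀ p : ℕ, 1 ≤ p → p ≤ T.length →
      get1 (encodeE T) p = Larr T RA ((LF.symm : Fin T.length → Fin T.length)^[p] kT) := by
  intro p hp1 hp2
  have hrot : rotR T ((RA ((LF.symm : Fin T.length → Fin T.length)^[p] kT)).val + 1 + p) = T := by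
    rw [hLF.rotR_symm_iterate, hkT, rotR_length]
  rw [Larr, rotR_eq_rotR_length_sub hp2 hrot, get1_encodeE_eq_get1_encodeE_rotR hp1 hp2]

/-- With `k_T = RA_T⁻¹[n]`, for every `1 ≤ p ≤ n`,
`⟦T⟧[p] = L_T[LF_T^{-p}(k_T)]`, where `LF_T^{-p}` is the `p`-fold iterate of the
inverse of the LF mapping. -/
theorem encode_eq_Larr_iterate [LinearOrder σ] [DecidableEq π] [Inhabited σ]
    (d : σ) (hd : ∀ a : σ, d ≤ a)
    (T : List (σ ⊕ π)) (hT : EndsWith T d)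
    (RA : Fin T.length ≃ Fin T.length) (hRA : IsRA T RA)
    (LF : Fin T.length ≃ Fin T.length) (hLF : IsLF T RA LF)
    (kT : Fin T.length) (hkT : (RA kT).val + 1 = T.length) :
    ∀ p : ℕ, 1 ≤ p → p ≤ T.length →
      get1 (encodeE T) p = Larr T RA ((LF.symm : Fin T.length → Fin T.length)^[p] kT) :=
  encode_eq_Larr_iterate_general T RA LF hLF kT hkT
end

section
/- Let T = cS, where c ∈ (Σ ∪ Π)∖{$} and S is a p-string of length n ≥ 1 ending with $, with $ occurring nowhere else in S. For any i and j with 1 ≤ i < j ≤ n, RA_S⁻¹[i] < RA_S⁻¹[j] if and only if RA_T⁻¹[i] < RA_T⁻¹[j]. -/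
/-! Common framework: parameterized strings over static alphabet `σ` and
parameter alphabet `π`.  A p-string is a `List (σ ⊕ π)`. -/

variable {σ π : Type*}

/-! Let `n = |S|` and `1 ≤ i < j ≤ n`. Since the prev-encoding of a position only looks to the
left, `⟨X⟩` is a prefix of `⟨XY⟩`. Both `S_i` and `T_i` begin with the suffix `S[n-i+1:n]`, whose
encoding ends with `$`, and both `S_j` and `T_j` begin with `S[n-j+1:n]`, whose encoding has no `$`
at position `i` because `$` is the last character of `S` only. So the encodings of the `i`-th and
`j`-th rotations already differ within their first `i` characters, which are the same for `S` and
for `T`, and the lexicographic comparison is decided there. -/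

theorem List.lex_append_iff_of_ne {α : Type*} {r : α → α → Prop} :
    ∀ {A B : List α}, A.length = B.length → A ≠ B →
      ∀ X Y : List α, List.Lex r (A ++ X) (B ++ Y) ↔ List.Lex r A B
  | [], [], _, hne, _, _ => absurd rfl hne
  | a :: A, b :: B, hlen, hne, X, Y => by
    simp only [List.cons_append, List.cons_lex_cons_iff]
    by_cases hab : a = b
    · subst hab
      have hA : A ≠ B := fun h => hne (h ▸ rfl)
      rw [List.lex_append_iff_of_ne (by simpa using hlen) hA X Y]
    · simp only [hab, false_and, or_false]

theorem List.lex_iff_of_isPrefix {α : Type*} {r : α → α → Prop} {A B X Y : List α}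
    (hA : A <+: X) (hB : B <+: Y) (hlen : A.length = B.length) (hne : A ≠ B) :
    List.Lex r X Y ↔ List.Lex r A B := by
  obtain ⟨X', rfl⟩ := hA
  obtain ⟨Y', rfl⟩ := hB
  exact List.lex_append_iff_of_ne hlen hne X' Y'

theorem pvlt_asymm [LinearOrder σ] : ∀ {x y : σ ⊕ ℕ∞}, pvlt x y → ¬ pvlt y x
  | .inl _, .inl _, h => not_lt.2 h.le
  | .inl _, .inr _, _ => id
  | .inr _, .inl _, h => h.elim
  | .inr _, .inr _, h => not_lt.2 h.le

theorem IsRA.symm_lt_symm_iff [LinearOrder σ] [DecidableEq π] {T : List (σ ⊕ π)}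
    {RA : Fin T.length ≃ Fin T.length} (hRA : IsRA T RA) {a b : Fin T.length} (hab : a ≠ b) :
    RA.symm a < RA.symm b ↔
      List.Lex pvlt (prevEnc (rotR T (a.val + 1))) (prevEnc (rotR T (b.val + 1))) := by
  refine ⟨fun h => by simpa using hRA _ _ h, fun h => ?_⟩
  rcases lt_trichotomy (RA.symm a) (RA.symm b) with hlt | heq | hgt
  · exact hlt
  · exact absurd (RA.symm.injective heq) hab
  · exact absurd h (List.lex_asymm pvlt_asymm (by simpa using hRA _ _ hgt))

-- `List.count` on `σ ⊕ π` goes through the derived `BEq` of `Sum`, which core does not prove lawful.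
instance instLawfulBEqSum [DecidableEq σ] [DecidableEq π] : LawfulBEq (σ ⊕ π) where
  rfl {x} := by
    cases x with
    | inl a => exact beq_self_eq_true a
    | inr b => exact beq_self_eq_true b
  eq_of_beq {x y} := by
    cases x <;> cases y <;>
      first | exact fun h => congrArg _ (eq_of_beq h) | exact fun h => nomatch h

theorem length_prevEnc [DecidableEq σ] [DecidableEq π] (W : List (σ ⊕ π)) :
    (prevEnc W).length = W.length := by
  simp [prevEnc]

theorem prevEnc_isPrefix_prevEnc [DecidableEq σ] [DecidableEq π] {X Y : List (σ ⊕ π)}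
    (h : X <+: Y) : prevEnc X <+: prevEnc Y := by
  obtain ⟨Z, rfl⟩ := h
  have hget : ∀ m < X.length, (X ++ Z)[m]? = X[m]? := fun m hm => List.getElem?_append_left hm
  rw [List.prefix_iff_eq_take, length_prevEnc]
  unfold prevEnc
  rw [← List.map_take, List.take_range, List.length_append, min_eq_left (Nat.le_add_right _ _)]
  refine List.map_congr_left fun k hk => ?_
  rw [List.mem_range] at hk
  rw [hget k hk]
  rcases X[k]? with _ | a | b
  · rfl
  · rfl
  · have hfilter : (List.range k).filter (fun j => (X ++ Z)[j]? = some (Sum.inr b))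
        = (List.range k).filter (fun j => X[j]? = some (Sum.inr b)) :=
      List.filter_congr fun m hm => by rw [hget m ((List.mem_range.1 hm).trans hk)]
    simp only [hfilter]

theorem getElem?_prevEnc_eq_inl_iff [DecidableEq σ] [DecidableEq π] (W : List (σ ⊕ π))
    (k : ℕ) (a : σ) : (prevEnc W)[k]? = some (Sum.inl a) ↔ W[k]? = some (Sum.inl a) := by
  unfold prevEnc
  rw [List.getElem?_map]
  by_cases hk : k < W.length
  · rw [List.getElem?_range hk, Option.map_some]
    rcases W[k]? with _ | b | b
    · simp
    · simp
    · simp only [Option.some.injEq, reduceCtorEq, iff_false]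
      split <;> simp
  · simp [hk]

theorem rotR_eq_drop_append_take {α : Type*} (W : List α) {k : ℕ} (hk : k ≤ W.length) :
    rotR W k = W.drop (W.length - k) ++ W.take (W.length - k) := by
  rw [← List.rotate_eq_drop_append_take (Nat.sub_le _ _)]
  induction k with
  | zero => simp [rotR, List.rotate_length]
  | succ k ih =>
    rw [rotR, ih (by omega), rotR1, List.length_rotate, List.rotate_rotate,
      show W.length - k + (W.length - 1) = W.length + (W.length - (k + 1)) by omega,
      ← List.rotate_rotate, List.rotate_length]

theorem rotR_cons_eq_drop_append_cons_take {α : Type*} (c : α) (S : List α) {k : ℕ}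
    (hk : k ≤ S.length) :
    rotR (c :: S) k = S.drop (S.length - k) ++ c :: S.take (S.length - k) := by
  rw [rotR_eq_drop_append_take (c :: S) (by simp; omega), List.length_cons,
    show S.length + 1 - k = S.length - k + 1 by omega, List.drop_succ_cons, List.take_succ_cons]

theorem EndsWith.getElem?_eq_inl_iff [DecidableEq σ] [DecidableEq π] {S : List (σ ⊕ π)}
    {d : σ} (hS : EndsWith S d) {k : ℕ} : S[k]? = some (Sum.inl d) ↔ k = S.length - 1 := by
  obtain ⟨-, hlast, hcount⟩ := hS
  have hsplit := List.dropLast_append_getLast? _ hlast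
  have hnot : Sum.inl d ∉ S.dropLast := by
    rw [← hsplit, List.count_append, List.count_singleton_self] at hcount
    exact List.count_eq_zero.1 (by omega)
  refine ⟨fun hk => ?_, fun hk => hk ▸ List.getLast?_eq_getElem? ▸ hlast⟩
  by_contra hne
  have hlt : k < S.length - 1 := by
    have := (List.getElem?_eq_some_iff.1 hk).1
    omega
  exact hnot (List.mem_of_getElem? (by rwa [List.getElem?_dropLast, if_pos hlt]))

theorem lex_prevEnc_rotR_iff_lex_prevEnc_rotR_cons [LinearOrder σ] [DecidableEq π] {d : σ}
    {S : List (σ ⊕ π)} (hS : EndsWith S d) (c : σ ⊕ π) {i j : ℕ} (hi : 1 ≤ i) (hij : i < j)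
    (hj : j ≤ S.length) :
    List.Lex pvlt (prevEnc (rotR S i)) (prevEnc (rotR S j)) ↔
      List.Lex pvlt (prevEnc (rotR (c :: S) i)) (prevEnc (rotR (c :: S) j)) := by
  set n := S.length
  set A := prevEnc (S.drop (n - i))
  set B := (prevEnc (S.drop (n - j))).take i
  have hlen : A.length = B.length := by
    simp only [A, B, List.length_take, length_prevEnc, List.length_drop]
    omega
  have hA : A[i - 1]? = some (Sum.inl d) := by
    rw [getElem?_prevEnc_eq_inl_iff, List.getElem?_drop, hS.getElem?_eq_inl_iff]
    omega
  have hB : B[i - 1]? ≠ some (Sum.inl d) := by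
    rw [List.getElem?_take_of_lt (by omega), Ne, getElem?_prevEnc_eq_inl_iff,
      List.getElem?_drop, hS.getElem?_eq_inl_iff]
    omega
  have key : ∀ U V, S.drop (n - i) <+: U → S.drop (n - j) <+: V →
      (List.Lex pvlt (prevEnc U) (prevEnc V) ↔ List.Lex pvlt A B) := fun U V hU hV =>
    List.lex_iff_of_isPrefix (prevEnc_isPrefix_prevEnc hU)
      ((List.take_prefix _ _).trans (prevEnc_isPrefix_prevEnc hV)) hlen fun h => hB (h ▸ hA)
  rw [key, key]
  all_goals first
    | rw [rotR_eq_drop_append_take S (by omega)]; exact List.prefix_append _ _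
    | rw [rotR_cons_eq_drop_append_cons_take c S (by omega)]; exact List.prefix_append _ _

/-- Let `T = cS` with `c ∈ (Σ ∪ Π) ∖ {$}` and `S` a p-string of
length `n ≥ 1` ending with `$` (occurring nowhere else).  For `1 ≤ i < j ≤ n`,
`RA_S⁻¹[i] < RA_S⁻¹[j]` iff `RA_T⁻¹[i] < RA_T⁻¹[j]`. -/
theorem RAinv_lt_iff [LinearOrder σ] [DecidableEq π]
    (d : σ)
    (S : List (σ ⊕ π)) (hS : EndsWith S d)
    (c : σ ⊕ π)
    (RAS : Fin S.length ≃ Fin S.length) (hRAS : IsRA S RAS)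
    (RAT : Fin (c :: S).length ≃ Fin (c :: S).length) (hRAT : IsRA (c :: S) RAT)
    (i j : ℕ) (h1 : 1 ≤ i) (h2 : i < j) (h3 : j ≤ S.length) :
    RAS.symm ⟨i - 1, by omega⟩ < RAS.symm ⟨j - 1, by omega⟩ ↔
      RAT.symm ⟨i - 1, by simp only [List.length_cons]; omega⟩
        < RAT.symm ⟨j - 1, by simp only [List.length_cons]; omega⟩ := by
  have hne : ∀ n (hi : i - 1 < n) (hj : j - 1 < n), (⟨i - 1, hi⟩ : Fin n) ≠ ⟨j - 1, hj⟩ :=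
    fun _ _ _ h => by simp only [Fin.mk.injEq] at h; omega
  rw [hRAS.symm_lt_symm_iff (hne _ _ _), hRAT.symm_lt_symm_iff (hne _ _ _)]
  simp only [Nat.sub_add_cancel h1, Nat.sub_add_cancel (h1.trans h2.le)]
  exact lex_prevEnc_rotR_iff_lex_prevEnc_rotR_cons hS c h1 h2 h3
end
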